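/- Define P̂_Γ : ℝ^{n−1} → ℝ by P̂_Γ(x) = P_Γ(x₁,…,x_{n−1},0). For u ∈ ℝⁿ write ū = (u₁,…,u_{n−1}) and ē = (1,…,1) ∈ ℝ^{n−1}, and for a set U ⊆ ℝⁿ let Ū denote its coordinate projection. Then: (i) for all u ∈ ℝⁿ, the projection of ∂P_Γ(u) onto the first n−1 coordinates equals ∂P̂_Γ(ū − u_n ē); (ii) the projection of ∂P_Γ(ℝⁿ) equals ∂P̂_Γ(ℝ^{n−1}); (iii) P_Γ is differentiable at u if and only if P̂_Γ is differentiable at ū − u_n ē; and (iv) if P̂_Γ has all n−1 partial derivatives at ū − u_n ē, then P_Γ is differentiable at u with ∇P_Γ(u) = (∂₁P̂_Γ(ū−u_n ē),…,∂_{n−1}P̂_Γ(ū−u_n ē), 1 − Σ_{i=1}^{n−1} ∂_iP̂_Γ(ū−u_n ē)). -/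

import Mathlib

open Filter Topology Matrix
open scoped Classical

namespace Soft

/-! Basic notions for nearest-neighbour subshifts of finite type (NNSOFT) on `ℤ^d`:
boxes, allowed colorings, color counts, the grand partition function `Z_Γ(m,u)`. -/

/-- The set of sites of the box `⟨m⟩ = [m₁] × ⋯ × [m_d]` (zero-indexed). -/
def box {d : ℕ} (m : Fin d → ℕ) : Set (Fin d → ℕ) := {x | ∀ i, x i < m i}

/-- The site `x + e_k`. -/
def step {d : ℕ} (x : Fin d → ℕ) (k : Fin d) : Fin d → ℕ :=
  Function.update x k (x k + 1)

/-- `vol(m) = m₁ ⋯ m_d`. -/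
def vol {d : ℕ} (m : Fin d → ℕ) : ℕ := ∏ i, m i

/-- `φ` satisfies all nearest-neighbour constraints imposed by `Γ` inside the box `⟨m⟩`:
whenever `x` and `x + e_k` both lie in the box, `(φ x, φ (x + e_k)) ∈ Γ k`. -/
def Allowed {d n : ℕ} (Γ : Fin d → Set (Fin n × Fin n)) (m : Fin d → ℕ)
    (φ : (Fin d → ℕ) → Fin n) : Prop :=
  ∀ x ∈ box m, ∀ k : Fin d, step x k ∈ box m → (φ x, φ (step x k)) ∈ Γ k

/-- `φ` takes the default color `0` outside the box `⟨m⟩`; colorings of `⟨m⟩` are represented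
by functions on all of `ℕ^d` normalized in this way (so that there are finitely many). -/
def Normalized {d n : ℕ} [NeZero n] (m : Fin d → ℕ) (φ : (Fin d → ℕ) → Fin n) : Prop :=
  ∀ x, x ∉ box m → φ x = 0

/-- `C_Γ(⟨m⟩)`: the set of `Γ`-allowed colorings of the box `⟨m⟩`. -/
def Col {d n : ℕ} [NeZero n] (Γ : Fin d → Set (Fin n × Fin n)) (m : Fin d → ℕ) :
    Set ((Fin d → ℕ) → Fin n) :=
  {φ | Allowed Γ m φ ∧ Normalized m φ}

/-- `Γ`-allowed colorings of the whole lattice `ℤ^d`. -/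
def AllowedZ {d n : ℕ} (Γ : Fin d → Set (Fin n × Fin n)) (φ : (Fin d → ℤ) → Fin n) : Prop :=
  ∀ (x : Fin d → ℤ) (k : Fin d), (φ x, φ (Function.update x k (x k + 1))) ∈ Γ k

/-- `c(φ)_j`: the number of sites of `⟨m⟩` colored `j` by `φ`. -/
noncomputable def cnt {d n : ℕ} (m : Fin d → ℕ) (φ : (Fin d → ℕ) → Fin n) (j : Fin n) : ℕ :=
  Nat.card {x : Fin d → ℕ // x ∈ box m ∧ φ x = j}

/-- The weight `exp (c(φ)ᵀ u)` of a coloring `φ` of `⟨m⟩`. -/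
noncomputable def weight {d n : ℕ} (m : Fin d → ℕ) (φ : (Fin d → ℕ) → Fin n)
    (u : Fin n → ℝ) : ℝ :=
  Real.exp (∑ j, (cnt m φ j : ℝ) * u j)

/-- The grand partition function `Z_Γ(m,u) = Σ_{φ ∈ C_Γ(⟨m⟩)} exp (c(φ)ᵀ u)`. -/
noncomputable def Z {d n : ℕ} [NeZero n] (Γ : Fin d → Set (Fin n × Fin n)) (m : Fin d → ℕ)
    (u : Fin n → ℝ) : ℝ :=
  ∑' φ : Col Γ m, weight m φ.1 u

/-- `y` is a subgradient of `f` at `u`. -/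
def Subgrad {N : ℕ} (f : (Fin N → ℝ) → ℝ) (u y : Fin N → ℝ) : Prop :=
  ∀ z, f u + ∑ i, y i * (z i - u i) ≤ f z

/-- The conjugate convex function `f*(p) = sup_u (pᵀu − f(u))`, with values in `EReal`. -/
noncomputable def conj {N : ℕ} (f : (Fin N → ℝ) → ℝ) (p : Fin N → ℝ) : EReal :=
  ⨆ u : Fin N → ℝ, (((∑ i, p i * u i) - f u : ℝ) : EReal)

/-- The gradient vector associated with a continuous linear functional on `ℝⁿ`. -/
noncomputable def gradOf {N : ℕ} (L : (Fin N → ℝ) →L[ℝ] ℝ) : Fin N → ℝ :=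
  fun i => L (Pi.single i 1)

/-- `f` is differentiable at `v`. -/
def DiffPt {N : ℕ} (f : (Fin N → ℝ) → ℝ) (v : Fin N → ℝ) : Prop :=
  ∃ L : (Fin N → ℝ) →L[ℝ] ℝ, HasFDerivAt f L v

/-- `P̂_Γ(x) = P_Γ(x₁,…,x_{n−1},0)` (total number of colors is `n + 1`). -/
noncomputable def Phat {n : ℕ} (P : (Fin (n + 1) → ℝ) → ℝ) (x : Fin n → ℝ) : ℝ :=
  P (Fin.snoc x 0)

/-- `ū = (u₁,…,u_{n−1})`, the projection onto the first `n` of `n + 1` coordinates. -/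
def projv {n : ℕ} (u : Fin (n + 1) → ℝ) : Fin n → ℝ := fun i => u i.castSucc

/-! Every coloring of `⟨m⟩` has exactly `vol m` sites, so `Z_Γ(m, u + t ē) = e^{t vol m} Z_Γ(m, u)`
and the pressure satisfies `P(u + t ē) = P(u) + t`; it is also convex, as a pointwise limit of
the log-sum-exp functions `log Z_Γ(m, ·) / vol m` (Hölder). Hence `P(u) = P̂(ū − uₙ ē) + uₙ`,
and (i)–(iii) transfer subgradients and derivatives along this affine change of variables, the
last coordinate of a subgradient being forced to be `1 − ∑ᵢ qᵢ`. For (iv): a convex function `f`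
with partial derivatives `g` at `v` is differentiable there, since the remainder
`F(h) = f(v + h) − f(v) − g ⬝ h` is convex with `F(0) = 0`, whence
`−F(−h) ≤ F(h) ≤ N⁻¹ ∑ᵢ F(N hᵢ eᵢ)` (Jensen), and both bounds are `o(h)`. -/

open Real Set Asymptotics

lemma convexOn_log_sum_exp {ι : Type*} [Fintype ι] {N : ℕ} (c : ι → Fin N → ℝ) :
    ConvexOn ℝ univ fun u => log (∑ i, exp (c i ⬝ᵥ u)) := by
  rcases isEmpty_or_nonempty ι with hι | hι
  · simpa using convexOn_const (0 : ℝ) convex_univ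
  refine convexOn_iff_forall_pos.2 ⟨convex_univ, fun u _ v _ a b ha hb hab => ?_⟩
  have hpos : ∀ w, 0 < ∑ i, exp (c i ⬝ᵥ w) := fun w =>
    Finset.sum_pos (fun i _ => exp_pos _) Finset.univ_nonempty
  have holder : ∑ i, exp (c i ⬝ᵥ (a • u + b • v)) ≤
      (∑ i, exp (c i ⬝ᵥ u)) ^ a * (∑ i, exp (c i ⬝ᵥ v)) ^ b := by
    have h := inner_le_Lp_mul_Lq_of_nonneg Finset.univ (Real.HolderConjugate.inv_inv ha hb hab)
      (fun i _ => (rpow_pos_of_pos (exp_pos (c i ⬝ᵥ u)) a).le)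
      (fun i _ => (rpow_pos_of_pos (exp_pos (c i ⬝ᵥ v)) b).le)
    simp only [← rpow_mul (exp_pos _).le, mul_inv_cancel₀ ha.ne', mul_inv_cancel₀ hb.ne', rpow_one,
      one_div, inv_inv] at h
    simpa only [dotProduct_add, dotProduct_smul, smul_eq_mul, exp_add, ← exp_mul, mul_comm a,
      mul_comm b] using h
  calc log (∑ i, exp (c i ⬝ᵥ (a • u + b • v)))
      ≤ log ((∑ i, exp (c i ⬝ᵥ u)) ^ a * (∑ i, exp (c i ⬝ᵥ v)) ^ b) :=
        log_le_log (hpos _) holder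
    _ = a • log (∑ i, exp (c i ⬝ᵥ u)) + b • log (∑ i, exp (c i ⬝ᵥ v)) := by
        rw [log_mul (rpow_pos_of_pos (hpos u) a).ne' (rpow_pos_of_pos (hpos v) b).ne',
          log_rpow (hpos u), log_rpow (hpos v), smul_eq_mul, smul_eq_mul]

lemma convexOn_of_tendsto {α E : Type*} [AddCommMonoid E] [Module ℝ E] {l : Filter α} [l.NeBot]
    {F : α → E → ℝ} {f : E → ℝ} {s : Set E} (hs : Convex ℝ s)
    (hF : ∀ᶠ k in l, ConvexOn ℝ s (F k)) (hf : ∀ x ∈ s, Tendsto (fun k => F k x) l (𝓝 (f x))) :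
    ConvexOn ℝ s f :=
  ⟨hs, fun x hx y hy a b ha hb hab =>
    le_of_tendsto_of_tendsto (hf _ (hs hx hy ha hb hab))
      (((hf x hx).const_smul a).add ((hf y hy).const_smul b))
      (hF.mono fun _ hk => hk.2 hx hy ha hb hab)⟩

lemma isLittleO_of_squeeze {α E : Type*} [Norm E] {l : Filter α} {f lo up : α → ℝ} {g : α → E}
    (hlo : lo =o[l] g) (hup : up =o[l] g) (h_lo : ∀ᶠ x in l, lo x ≤ f x)
    (h_up : ∀ᶠ x in l, f x ≤ up x) : f =o[l] g := by
  refine IsBigO.trans_isLittleO (g := fun x => ‖lo x‖ + ‖up x‖) ?_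
    (hlo.norm_left.add hup.norm_left)
  refine IsBigO.of_bound' ((h_lo.and h_up).mono fun x hx => ?_)
  simp only [Real.norm_eq_abs]
  rw [abs_of_nonneg (a := |lo x| + |up x|) (by positivity), abs_le]
  constructor <;> linarith [neg_abs_le (lo x), le_abs_self (up x), abs_nonneg (lo x),
    abs_nonneg (up x)]

section ConvexDifferentiability

variable {N : ℕ}

lemma _root_.ConvexOn.neg_map_neg_le {E : Type*} [AddCommGroup E] [Module ℝ E] {F : E → ℝ}
    (hF : ConvexOn ℝ univ F) (h0 : F 0 = 0) (h : E) : -F (-h) ≤ F h := by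
  have := hF.2 (mem_univ h) (mem_univ (-h)) (by norm_num : (0 : ℝ) ≤ 1 / 2)
    (by norm_num : (0 : ℝ) ≤ 1 / 2) (by norm_num)
  simp only [smul_neg, add_neg_cancel, h0, smul_eq_mul] at this
  linarith

lemma _root_.ConvexOn.map_le_sum_coord {F : (Fin N → ℝ) → ℝ} (hF : ConvexOn ℝ univ F) (hN : N ≠ 0)
    (h : Fin N → ℝ) :
    F h ≤ ∑ i, (N : ℝ)⁻¹ * F ((N * h i) • Pi.single i 1) := by
  have hN' : (N : ℝ) ≠ 0 := Nat.cast_ne_zero.2 hN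
  have hw : ∑ _i : Fin N, (N : ℝ)⁻¹ = 1 := by simp [hN']
  have hpt : ∑ i, (N : ℝ)⁻¹ • ((N * h i) • (Pi.single i 1 : Fin N → ℝ)) = h := by
    simp_rw [smul_smul, inv_mul_cancel_left₀ hN']
    ext j; simp [Finset.sum_apply, Pi.single_apply]
  simpa [hpt] using hF.map_sum_le (t := Finset.univ)
    (p := fun i => ((N : ℝ) * h i) • (Pi.single i 1 : Fin N → ℝ)) (fun _ _ => by positivity) hw
    (fun _ _ => mem_univ _)

lemma isLittleO_sum_comp_coord {φ : Fin N → ℝ → ℝ} (hφ : ∀ i, φ i =o[𝓝 0] fun τ => τ) (c : ℝ) :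
    (fun h : Fin N → ℝ => ∑ i, φ i (c * h i)) =o[𝓝 0] fun h => h := by
  refine IsLittleO.fun_sum fun i _ => ?_
  have hk : Tendsto (fun h : Fin N → ℝ => c * h i) (𝓝 0) (𝓝 0) := by
    simpa using ((continuous_apply i).tendsto (0 : Fin N → ℝ)).const_mul c
  have hkO : (fun h : Fin N → ℝ => c * h i) =O[𝓝 0] fun h => h :=
    ((ContinuousLinearMap.proj i : (Fin N → ℝ) →L[ℝ] ℝ).isBigO_id _).const_mul_left c
  exact ((hφ i).comp_tendsto hk).trans_isBigO hkO

lemma _root_.ConvexOn.isLittleO_of_coord {F : (Fin N → ℝ) → ℝ} (hF : ConvexOn ℝ univ F)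
    (h0 : F 0 = 0)
    (hcoord : ∀ i, (fun τ : ℝ => F (τ • Pi.single i 1)) =o[𝓝 0] fun τ => τ) :
    F =o[𝓝 0] fun h => h := by
  rcases eq_or_ne N 0 with rfl | hN
  · have hF0 : F = 0 := funext fun h => by rw [Subsingleton.elim h 0, h0]; rfl
    rw [hF0]
    exact isLittleO_zero _ _
  set U := fun h : Fin N → ℝ => ∑ i, (N : ℝ)⁻¹ * F ((N * h i) • Pi.single i 1)
  have hU : U =o[𝓝 0] fun h => h :=
    isLittleO_sum_comp_coord (fun i => (hcoord i).const_mul_left _) N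
  have hV : (fun h => -U (-h)) =o[𝓝 0] fun h => h := by
    have := hU.comp_tendsto (continuous_neg.tendsto' (0 : Fin N → ℝ) 0 neg_zero)
    exact (isLittleO_neg_right.1 this).neg_left
  refine isLittleO_of_squeeze hV hU (Eventually.of_forall fun h => ?_)
    (Eventually.of_forall (hF.map_le_sum_coord hN))
  exact (neg_le_neg (hF.map_le_sum_coord hN (-h))).trans (hF.neg_map_neg_le h0 h)

lemma _root_.ConvexOn.hasFDerivAt_of_hasDerivAt_update {f : (Fin N → ℝ) → ℝ}
    (hf : ConvexOn ℝ univ f) {v g : Fin N → ℝ} (hg : ∀ i, HasDerivAt (fun t => f (Function.update v i t)) (g i) (v i)) :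
    HasFDerivAt f (∑ i, g i • ContinuousLinearMap.proj (R := ℝ) (φ := fun _ : Fin N => ℝ) i) v := by
  rw [hasFDerivAt_iff_isLittleO_nhds_zero]
  refine ConvexOn.isLittleO_of_coord ?_ (by simp) fun i => ?_
  · have htr : ConvexOn ℝ univ fun h => f (v + h) := by
      simpa [Function.comp_def] using hf.translate_right v
    exact (htr.sub (concaveOn_const (f v) convex_univ)).sub
      ((ContinuousLinearMap.toLinearMap _).concaveOn convex_univ)
  · have hupdate : ∀ τ : ℝ, Function.update v i (v i + τ) = v + τ • Pi.single i 1 := fun τ => by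
      ext j; by_cases hj : j = i <;> simp [hj]
    refine (hasDerivAt_iff_isLittleO_nhds_zero.1 (hg i)).congr_left fun τ => ?_
    simp [hupdate, Pi.single_apply]

end ConvexDifferentiability

section Colorings

variable {d n : ℕ}

lemma box_eq_piFinset (m : Fin d → ℕ) :
    box m = ↑(Fintype.piFinset fun i => Finset.range (m i)) := by
  ext x; simp [box]

lemma box_finite (m : Fin d → ℕ) : (box m).Finite :=
  box_eq_piFinset m ▸ Finset.finite_toSet _

lemma col_finite [NeZero n] (Γ : Fin d → Set (Fin n × Fin n)) (m : Fin d → ℕ) :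
    (Col Γ m).Finite := by
  have := (box_finite m).to_subtype
  refine (Set.finite_range fun ψ : box m → Fin n =>
    fun x => if h : x ∈ box m then ψ ⟨x, h⟩ else 0).subset ?_
  rintro φ ⟨-, hφ⟩
  refine ⟨fun x => φ x, funext fun x => ?_⟩
  by_cases hx : x ∈ box m <;> simp [hx, hφ x]

lemma col_nonempty [NeZero n] {Γ : Fin d → Set (Fin n × Fin n)}
    (hne : ∃ φ : (Fin d → ℤ) → Fin n, AllowedZ Γ φ) (m : Fin d → ℕ) :
    (Col Γ m).Nonempty := by
  obtain ⟨ψ, hψ⟩ := hne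
  refine ⟨fun x => if x ∈ box m then ψ (fun i => (x i : ℤ)) else 0, ?_, fun x hx => if_neg hx⟩
  intro x hx k hk
  have hcast : (fun i => (step x k i : ℤ)) = Function.update (fun i => (x i : ℤ)) k (x k + 1) := by
    ext i
    by_cases hik : i = k
    · subst hik; simp [step]
    · simp [step, hik]
  simpa only [if_pos hx, if_pos hk, hcast] using hψ (fun i => (x i : ℤ)) k

lemma sum_cnt_eq_vol (m : Fin d → ℕ) (φ : (Fin d → ℕ) → Fin n) :
    ∑ j, cnt m φ j = vol m := by
  set s := Fintype.piFinset fun i => Finset.range (m i)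
  have hcnt : ∀ j, cnt m φ j = (s.filter (φ · = j)).card := fun j => by
    rw [cnt, ← Nat.card_eq_finsetCard]
    congr; ext x; simp [s, box]
  simp_rw [hcnt, ← Finset.card_eq_sum_card_fiberwise (fun x _ => Finset.mem_univ (φ x))]
  simp [s, vol]

lemma weight_add_smul_one (m : Fin d → ℕ) (φ : (Fin d → ℕ) → Fin n) (u : Fin n → ℝ) (t : ℝ) :
    weight m φ (u + t • 1) = exp (t * vol m) * weight m φ u := by
  have hvol : ∑ j, (cnt m φ j : ℝ) = vol m := by exact_mod_cast sum_cnt_eq_vol m φ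
  simp only [weight, ← exp_add, Pi.add_apply, Pi.smul_apply, Pi.one_apply, smul_eq_mul, mul_add,
    mul_one, Finset.sum_add_distrib, ← Finset.sum_mul, hvol]
  ring_nf

lemma Z_add_smul_one [NeZero n] (Γ : Fin d → Set (Fin n × Fin n)) (m : Fin d → ℕ)
    (u : Fin n → ℝ) (t : ℝ) :
    Z Γ m (u + t • 1) = exp (t * vol m) * Z Γ m u := by
  simp only [Z, weight_add_smul_one, tsum_mul_left]

lemma Z_pos [NeZero n] {Γ : Fin d → Set (Fin n × Fin n)}
    (hne : ∃ φ : (Fin d → ℤ) → Fin n, AllowedZ Γ φ) (m : Fin d → ℕ) (u : Fin n → ℝ) :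
    0 < Z Γ m u := by
  have := (col_finite Γ m).to_subtype
  obtain ⟨φ, hφ⟩ := col_nonempty hne m
  exact (Summable.of_finite).tsum_pos (fun _ => (exp_pos _).le) ⟨φ, hφ⟩ (exp_pos _)

end Colorings

section Pressure

variable {d n : ℕ} [NeZero n] {Γ : Fin d → Set (Fin n × Fin n)} {P : (Fin n → ℝ) → ℝ}

lemma convexOn_log_Z (Γ : Fin d → Set (Fin n × Fin n)) (m : Fin d → ℕ) :
    ConvexOn ℝ univ fun u => log (Z Γ m u) := by
  have := (col_finite Γ m).fintype
  have hw : ∀ (φ : Col Γ m) (u : Fin n → ℝ),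
      weight m φ.1 u = exp ((fun j => (cnt m φ.1 j : ℝ)) ⬝ᵥ u) := fun _ _ => rfl
  simp only [Z, tsum_fintype, hw]
  exact convexOn_log_sum_exp _

lemma convexOn_pressure
    (hP : ∀ u, Tendsto (fun m : Fin d → ℕ => log (Z Γ m u) / vol m) atTop (𝓝 (P u))) :
    ConvexOn ℝ univ P :=
  convexOn_of_tendsto convex_univ (Eventually.of_forall fun m => by
      simpa only [div_eq_inv_mul, smul_eq_mul] using
        (convexOn_log_Z Γ m).smul (inv_nonneg.2 (Nat.cast_nonneg (vol m) : (0 : ℝ) ≤ vol m)))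
    fun u _ => hP u

lemma pressure_add_smul_one (hne : ∃ φ : (Fin d → ℤ) → Fin n, AllowedZ Γ φ)
    (hP : ∀ u, Tendsto (fun m : Fin d → ℕ => log (Z Γ m u) / vol m) atTop (𝓝 (P u)))
    (u : Fin n → ℝ) (t : ℝ) :
    P (u + t • 1) = P u + t := by
  refine tendsto_nhds_unique (hP (u + t • 1)) (((hP u).add_const t).congr' ?_)
  filter_upwards [eventually_ge_atTop 1] with m hm
  have hvol : (0 : ℝ) < vol m := by
    exact_mod_cast Finset.prod_pos fun i _ => hm i
  rw [Z_add_smul_one, log_mul (exp_pos _).ne' (Z_pos hne m u).ne', log_exp]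
  field_simp
  ring

end Pressure

section Reduction

variable {n : ℕ}

def reduceCoords (n : ℕ) : (Fin (n + 1) → ℝ) →L[ℝ] (Fin n → ℝ) :=
  ContinuousLinearMap.pi fun i =>
    ContinuousLinearMap.proj (R := ℝ) (φ := fun _ : Fin (n + 1) => ℝ) i.castSucc -
      ContinuousLinearMap.proj (Fin.last n)

lemma reduceCoords_apply (u : Fin (n + 1) → ℝ) (i : Fin n) :
    reduceCoords n u i = u i.castSucc - u (Fin.last n) := by
  simp [reduceCoords]

lemma reduceCoords_eq (u : Fin (n + 1) → ℝ) :
    reduceCoords n u = projv u - u (Fin.last n) • 1 := by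
  ext i; simp [reduceCoords_apply, projv]

def snocZero (n : ℕ) : (Fin n → ℝ) →L[ℝ] (Fin (n + 1) → ℝ) :=
  ContinuousLinearMap.pi (Fin.snoc (α := fun _ => (Fin n → ℝ) →L[ℝ] ℝ) ContinuousLinearMap.proj 0)

lemma snocZero_apply (x : Fin n → ℝ) : snocZero n x = Fin.snoc x 0 := by
  ext j; induction j using Fin.lastCases <;> simp [snocZero]

lemma reduceCoords_snocZero_add_smul_one (x : Fin n → ℝ) (c : ℝ) :
    reduceCoords n (snocZero n x + c • 1) = x := by
  ext i; simp [reduceCoords_apply, snocZero_apply]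

lemma snocZero_reduceCoords_add_smul_one (u : Fin (n + 1) → ℝ) :
    snocZero n (reduceCoords n u) + u (Fin.last n) • 1 = u := by
  ext j; induction j using Fin.lastCases <;> simp [snocZero_apply, reduceCoords_apply]

lemma projv_snoc (q : Fin n → ℝ) (c : ℝ) : projv (Fin.snoc q c) = q := by
  ext i; simp [projv]

lemma sum_mul_snoc_zero (y : Fin (n + 1) → ℝ) (w : Fin n → ℝ) :
    ∑ j, y j * Fin.snoc (α := fun _ => ℝ) w 0 j = ∑ i, projv y i * w i := by
  simp [Fin.sum_univ_castSucc, projv]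

lemma sum_snoc_mul (q : Fin n → ℝ) (w : Fin (n + 1) → ℝ) :
    ∑ j, Fin.snoc (α := fun _ => ℝ) q (1 - ∑ i, q i) j * w j =
      ∑ i, q i * reduceCoords n w i + w (Fin.last n) := by
  simp only [Fin.sum_univ_castSucc, Fin.snoc_castSucc, Fin.snoc_last, reduceCoords_apply, mul_sub,
    Finset.sum_sub_distrib, ← Finset.sum_mul]
  ring

lemma convexOn_phat {f : (Fin (n + 1) → ℝ) → ℝ} (hf : ConvexOn ℝ univ f) :
    ConvexOn ℝ univ (Phat f) := by
  have h : Phat f = f ∘ snocZero n := funext fun x => by simp [Phat, snocZero_apply]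
  rw [h]
  exact hf.comp_linearMap (snocZero n).toLinearMap

lemma gradOf_sum_smul_proj (g : Fin n → ℝ) :
    gradOf (∑ i, g i • ContinuousLinearMap.proj (R := ℝ) (φ := fun _ : Fin n => ℝ) i) = g := by
  ext i; simp [gradOf, Pi.single_apply]

lemma gradOf_comp_reduceCoords_add_proj_last (L : (Fin n → ℝ) →L[ℝ] ℝ) :
    gradOf (L.comp (reduceCoords n) + ContinuousLinearMap.proj (Fin.last n)) =
      Fin.snoc (gradOf L) (1 - ∑ i, gradOf L i) := by
  have hlast : reduceCoords n (Pi.single (Fin.last n) 1) = -1 := by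
    ext i; simp [reduceCoords_apply, (Fin.castSucc_lt_last i).ne]
  have hcast : ∀ i, reduceCoords n (Pi.single i.castSucc 1) = Pi.single i 1 := fun i => by
    ext k; simp [reduceCoords_apply, Pi.single_apply, (Fin.castSucc_lt_last i).ne']
  have hone : L 1 = ∑ i, gradOf L i := by
    rw [← Finset.univ_sum_single (1 : Fin n → ℝ), map_sum]; rfl
  ext j
  induction j using Fin.lastCases with
  | last => simp [gradOf, hlast, hone]; ring
  | cast i => simp [gradOf, hcast, (Fin.castSucc_lt_last i).ne]

variable {f : (Fin (n + 1) → ℝ) → ℝ}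

lemma eq_phat_reduceCoords_add_last (hf : ∀ u t, f (u + t • 1) = f u + t)
    (u : Fin (n + 1) → ℝ) :
    f u = Phat f (reduceCoords n u) + u (Fin.last n) := by
  conv_lhs => rw [← snocZero_reduceCoords_add_smul_one u]
  rw [hf, Phat, snocZero_apply]

lemma Subgrad.phat (hf : ∀ u t, f (u + t • 1) = f u + t) {u y : Fin (n + 1) → ℝ}
    (hy : Subgrad f u y) :
    Subgrad (Phat f) (reduceCoords n u) (projv y) := by
  intro x
  set z := snocZero n x + u (Fin.last n) • 1
  have hz : z - u = snocZero n (x - reduceCoords n u) := by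
    conv_lhs => rw [← snocZero_reduceCoords_add_smul_one u]
    simp [z, map_sub]
  have hfz : f z = Phat f x + u (Fin.last n) := by rw [hf, Phat, snocZero_apply]
  have hsum : ∑ j, y j * (z j - u j) = ∑ i, projv y i * (x i - reduceCoords n u i) := by
    simpa [← Pi.sub_apply, hz, snocZero_apply] using sum_mul_snoc_zero y (x - reduceCoords n u)
  have := hy z
  rw [hfz, eq_phat_reduceCoords_add_last hf u, hsum] at this
  linarith

lemma Subgrad.snoc_of_phat (hf : ∀ u t, f (u + t • 1) = f u + t) {u : Fin (n + 1) → ℝ}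
    {q : Fin n → ℝ} (hq : Subgrad (Phat f) (reduceCoords n u) q) :
    Subgrad f u (Fin.snoc q (1 - ∑ i, q i)) := by
  intro z
  have := hq (reduceCoords n z)
  have hsum := sum_snoc_mul q (z - u)
  simp only [Pi.sub_apply, map_sub] at hsum
  rw [eq_phat_reduceCoords_add_last hf u, eq_phat_reduceCoords_add_last hf z, hsum]
  linarith

lemma hasFDerivAt_of_phat (hf : ∀ u t, f (u + t • 1) = f u + t) {u : Fin (n + 1) → ℝ}
    {L : (Fin n → ℝ) →L[ℝ] ℝ} (hL : HasFDerivAt (Phat f) L (reduceCoords n u)) :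
    HasFDerivAt f (L.comp (reduceCoords n) + ContinuousLinearMap.proj (Fin.last n)) u :=
  ((hL.comp u (reduceCoords n).hasFDerivAt).add
    (ContinuousLinearMap.proj (Fin.last n)).hasFDerivAt).congr_of_eventuallyEq
    (Eventually.of_forall (eq_phat_reduceCoords_add_last hf))

lemma hasFDerivAt_phat (hf : ∀ u t, f (u + t • 1) = f u + t) {u : Fin (n + 1) → ℝ}
    {L : (Fin (n + 1) → ℝ) →L[ℝ] ℝ} (hL : HasFDerivAt f L u) :
    HasFDerivAt (Phat f) (L.comp (snocZero n)) (reduceCoords n u) := by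
  have hS : HasFDerivAt (fun x => snocZero n x + u (Fin.last n) • 1) (snocZero n)
      (reduceCoords n u) := (snocZero n).hasFDerivAt.add_const _
  have hL' : HasFDerivAt f L (snocZero n (reduceCoords n u) + u (Fin.last n) • 1) := by
    rwa [snocZero_reduceCoords_add_smul_one]
  refine ((HasFDerivAt.comp (f := fun x => snocZero n x + u (Fin.last n) • 1) _ hL' hS).sub_const
    (u (Fin.last n))).congr_of_eventuallyEq (Eventually.of_forall fun x => ?_)
  simp [hf, Phat, snocZero_apply]

end Reduction

theorem reduced_pressure_subdifferential_general
    (d n : ℕ)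
    (Γ : Fin d → Set (Fin (n + 1) × Fin (n + 1)))
    (hne : ∃ φ : (Fin d → ℤ) → Fin (n + 1), AllowedZ Γ φ)
    (P : (Fin (n + 1) → ℝ) → ℝ)
    (hP : ∀ u, Tendsto (fun m : Fin d → ℕ =>
        Real.log (Z Γ m u) / (vol m : ℝ)) atTop (𝓝 (P u))) :
    (∀ u : Fin (n + 1) → ℝ,
      projv '' {y | Subgrad P u y} =
        {q | Subgrad (Phat P) (projv u - u (Fin.last n) • (1 : Fin n → ℝ)) q}) ∧
    (projv '' (⋃ u : Fin (n + 1) → ℝ, {y | Subgrad P u y}) =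
        ⋃ x : Fin n → ℝ, {q | Subgrad (Phat P) x q}) ∧
    (∀ u : Fin (n + 1) → ℝ,
      DiffPt P u ↔ DiffPt (Phat P) (projv u - u (Fin.last n) • (1 : Fin n → ℝ))) ∧
    (∀ (u : Fin (n + 1) → ℝ) (g : Fin n → ℝ),
      (∀ i : Fin n, HasDerivAt
          (fun t : ℝ => Phat P
            (Function.update (projv u - u (Fin.last n) • (1 : Fin n → ℝ)) i t))
          (g i) ((projv u - u (Fin.last n) • (1 : Fin n → ℝ)) i)) →
      ∃ L : (Fin (n + 1) → ℝ) →L[ℝ] ℝ, HasFDerivAt P L u ∧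
        gradOf L = Fin.snoc g (1 - ∑ i, g i)) := by
  have hshift : ∀ u t, P (u + t • 1) = P u + t := pressure_add_smul_one hne hP
  simp only [← reduceCoords_eq]
  refine ⟨fun u => ?_, ?_, fun u => ⟨?_, ?_⟩, fun u g hg => ?_⟩
  · ext q
    refine ⟨?_, fun hq => ⟨_, hq.snoc_of_phat hshift, projv_snoc q _⟩⟩
    rintro ⟨y, hy, rfl⟩
    exact hy.phat hshift
  · ext q
    simp only [mem_image, mem_iUnion, mem_ofPred_eq]
    refine ⟨fun ⟨y, ⟨u, hy⟩, hq⟩ => ⟨_, hq ▸ hy.phat hshift⟩, fun ⟨x, hq⟩ => ?_⟩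
    rw [← reduceCoords_snocZero_add_smul_one x 0] at hq
    exact ⟨_, ⟨_, hq.snoc_of_phat hshift⟩, projv_snoc q _⟩
  · rintro ⟨L, hL⟩
    exact ⟨_, hasFDerivAt_phat hshift hL⟩
  · rintro ⟨L, hL⟩
    exact ⟨_, hasFDerivAt_of_phat hshift hL⟩
  · have hconv := convexOn_phat (convexOn_pressure hP)
    refine ⟨_, hasFDerivAt_of_phat hshift (hconv.hasFDerivAt_of_hasDerivAt_update hg), ?_⟩
    rw [gradOf_comp_reduceCoords_add_proj_last, gradOf_sum_smul_proj]

/-- With `P̂_Γ(x) = P_Γ(x,0)`: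
(i) the projection of `∂P_Γ(u)` onto the first `n−1` coordinates equals
`∂P̂_Γ(ū − u_n ē)`; (ii) the projection of `∂P_Γ(ℝⁿ)` equals `∂P̂_Γ(ℝ^{n−1})`;
(iii) `P_Γ` is differentiable at `u` iff `P̂_Γ` is differentiable at `ū − u_n ē`;
(iv) if `P̂_Γ` has all partial derivatives at `ū − u_n ē`, then `P_Γ` is differentiable
at `u` with the stated gradient.  (Here the number of colors is `n + 1`.) -/
theorem reduced_pressure_subdifferential
    (d n : ℕ) (hd : 0 < d)
    (Γ : Fin d → Set (Fin (n + 1) × Fin (n + 1)))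
    (hne : ∃ φ : (Fin d → ℤ) → Fin (n + 1), AllowedZ Γ φ)
    (P : (Fin (n + 1) → ℝ) → ℝ)
    (hP : ∀ u, Tendsto (fun m : Fin d → ℕ =>
        Real.log (Z Γ m u) / (vol m : ℝ)) atTop (𝓝 (P u))) :
    (∀ u : Fin (n + 1) → ℝ,
      projv '' {y | Subgrad P u y} =
        {q | Subgrad (Phat P) (projv u - u (Fin.last n) • (1 : Fin n → ℝ)) q}) ∧
    (projv '' (⋃ u : Fin (n + 1) → ℝ, {y | Subgrad P u y}) =
        ⋃ x : Fin n → ℝ, {q | Subgrad (Phat P) x q}) ∧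
    (∀ u : Fin (n + 1) → ℝ,
      DiffPt P u ↔ DiffPt (Phat P) (projv u - u (Fin.last n) • (1 : Fin n → ℝ))) ∧
    (∀ (u : Fin (n + 1) → ℝ) (g : Fin n → ℝ),
      (∀ i : Fin n, HasDerivAt
          (fun t : ℝ => Phat P
            (Function.update (projv u - u (Fin.last n) • (1 : Fin n → ℝ)) i t))
          (g i) ((projv u - u (Fin.last n) • (1 : Fin n → ℝ)) i)) →
      ∃ L : (Fin (n + 1) → ℝ) →L[ℝ] ℝ, HasFDerivAt P L u ∧
        gradOf L = Fin.snoc g (1 - ∑ i, g i)) :=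
  reduced_pressure_subdifferential_general d n Γ hne P hP

end Soft
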